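/- arXiv:1806.03229 — 3 statements merged into one kernel-verified Lean document; each statement's English description precedes it below -/
import Mathlib

section
/- Let H be a complex Hilbert space, T ∈ B(H), and let N be a closed subspace of H such that H is the closed linear span of ⋃ₙ Tⁿ(N). Then dim(ker T*) ≤ dim N. (Equivalently: the order of multicyclicity of T is at least dim ker T*.) -/
open ContinuousLinearMap

/-! The orthogonal projection `P` onto `ker T*` maps `N` onto a dense subspace of `ker T*`:
a vector of `ker T*` orthogonal to `P N` is orthogonal to `N` and, being killed by `T*`, to
every `Tⁿ N` with `n ≥ 1`, hence to all of `H`. A bounded operator with dense range cannot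
increase Hilbert dimension: every vector of an orthonormal basis of the target pairs nontrivially
with the image of some basis vector of the source, while by Bessel's inequality each such image
pairs nontrivially with only countably many of them (in finite dimensions, compare ranks). -/

open Submodule Set Cardinal

universe u

section

variable {𝕜 : Type*} [RCLike 𝕜]

theorem Orthonormal.countable_setOf_inner_ne_zero {E ι : Type*} [NormedAddCommGroup E]
    [InnerProductSpace 𝕜 E] {b : ι → E} (hb : Orthonormal 𝕜 b) (x : E) :
    {i | inner 𝕜 (b i) x ≠ 0}.Countable := by
  simpa [Function.support] using (hb.inner_products_summable (x := x)).countable_support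

theorem exists_inner_ne_zero_of_dense_span {E κ : Type*} [NormedAddCommGroup E]
    [InnerProductSpace 𝕜 E] {v : κ → E} (hv : (span 𝕜 (range v)).topologicalClosure = ⊤)
    {x : E} (hx : x ≠ 0) : ∃ k, inner 𝕜 x (v k) ≠ 0 := by
  by_contra! h
  have hortho : span 𝕜 {x} ⟂ span 𝕜 (range v) := by
    rw [isOrtho_span]
    rintro _ rfl _ ⟨k, rfl⟩
    exact h k
  refine hx (Dense.eq_zero_of_inner_left 𝕜 (dense_iff_topologicalClosure_eq_top.mpr hv) ?_)
  exact (mem_orthogonal' _ _).mp (hortho.le (mem_span_singleton_self x))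

theorem Orthonormal.mk_le_of_dense_span {E ι κ : Type u} [NormedAddCommGroup E]
    [InnerProductSpace 𝕜 E] {b : ι → E} (hb : Orthonormal 𝕜 b) {v : κ → E}
    (hv : (span 𝕜 (range v)).topologicalClosure = ⊤) : #ι ≤ #κ := by
  cases finite_or_infinite κ
  · have := FiniteDimensional.span_of_finite 𝕜 (finite_range v)
    have hspan : span 𝕜 (range v) = ⊤ := by
      rwa [(span 𝕜 (range v)).closed_of_finiteDimensional.submodule_topologicalClosure_eq] at hv
    calc #ι ≤ Module.rank 𝕜 E := by simpa using hb.linearIndependent.cardinal_lift_le_rank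
      _ = Module.rank 𝕜 (span 𝕜 (range v)) := by rw [hspan, rank_top]
      _ ≤ #(range v) := rank_span_le _
      _ ≤ #κ := mk_range_le
  · choose k hk using fun i => exists_inner_ne_zero_of_dense_span hv (hb.ne_zero i)
    refine (mk_le_mk_mul_of_mk_preimage_le k fun k₀ => ?_).trans (mul_aleph0_eq (aleph0_le_mk κ)).le
    refine ((hb.countable_setOf_inner_ne_zero (v k₀)).mono ?_).le_aleph0
    rintro i rfl
    exact hk i

theorem exists_linearIsometry_of_denseRange {E F : Type u} [NormedAddCommGroup E]
    [InnerProductSpace 𝕜 E] [CompleteSpace E] [NormedAddCommGroup F] [InnerProductSpace 𝕜 F]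
    [CompleteSpace F] (A : E →L[𝕜] F) (hA : DenseRange A) : Nonempty (F →ₗᵢ[𝕜] E) := by
  obtain ⟨s, bE, -⟩ := exists_hilbertBasis 𝕜 E
  obtain ⟨t, bF, -⟩ := exists_hilbertBasis 𝕜 F
  have hdense : (span 𝕜 (range (A ∘ bE))).topologicalClosure = ⊤ := by
    rw [← dense_iff_topologicalClosure_eq_top, range_comp, ← coe_coe, span_image]
    exact hA.dense_image A.continuous (dense_iff_topologicalClosure_eq_top.mpr bE.dense_span)
  obtain ⟨g⟩ := bF.orthonormal.mk_le_of_dense_span hdense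
  exact ⟨(bE.orthonormal.comp g g.injective).orthogonalFamily.linearIsometry.comp
    bF.repr.toLinearIsometry⟩

variable {E : Type*} [NormedAddCommGroup E] [InnerProductSpace 𝕜 E]

theorem Submodule.denseRange_orthogonalProjectionOnto_comp_subtypeL (K N : Submodule 𝕜 E)
    [CompleteSpace K] (h : K ⊓ Nᗮ = ⊥) :
    DenseRange (K.orthogonalProjectionOnto ∘L N.subtypeL) := by
  set A := K.orthogonalProjectionOnto ∘L N.subtypeL
  change Dense (LinearMap.range (A : N →ₗ[𝕜] K) : Set K)
  rw [dense_iff_topologicalClosure_eq_top, topologicalClosure_eq_top_iff, eq_bot_iff]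
  intro y hy
  have hyN : (y : E) ∈ Nᗮ := fun x hx => by
    rw [← inner_orthogonalProjectionOnto_eq_of_mem_right]
    exact hy _ ⟨⟨x, hx⟩, rfl⟩
  have hy0 : (y : E) ∈ K ⊓ Nᗮ := ⟨y.2, hyN⟩
  rw [h, mem_bot] at hy0
  exact (mem_bot 𝕜).mpr (coe_eq_zero.mp hy0)

theorem ContinuousLinearMap.ker_adjoint_inf_orthogonal_eq_bot_of_dense_iSup_map_pow
    [CompleteSpace E] (T : E →L[𝕜] E) (N : Submodule 𝕜 E)
    (hspan : (⨆ n : ℕ, N.map ((T ^ n : E →L[𝕜] E) : E →ₗ[𝕜] E)).topologicalClosure = ⊤) :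
    LinearMap.ker (adjoint T : E →ₗ[𝕜] E) ⊓ Nᗮ = ⊥ := by
  rw [topologicalClosure_eq_top_iff, ← iInf_orthogonal] at hspan
  rw [eq_bot_iff, ← hspan]
  rintro y ⟨hyT, hyN⟩
  refine (mem_iInf _).mpr fun n => ?_
  rintro _ ⟨x, hx, rfl⟩
  cases n with
  | zero => simpa using hyN x hx
  | succ n =>
    have hyT' : y ∈ T.rangeᗮ := by rwa [orthogonal_range]
    exact hyT' _ ⟨(T ^ n) x, by rw [pow_succ']; rfl⟩

end

/-- `dim (ker T*) ≤ dim N` is expressed by the existence of a linear isometry from `ker T*`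
into `N`. -/
theorem dim_ker_adjoint_le_of_span (H : Type*) [NormedAddCommGroup H]
    [InnerProductSpace ℂ H] [CompleteSpace H] (T : H →L[ℂ] H)
    (N : Submodule ℂ H) (hN : IsClosed (N : Set H))
    (hspan : (⨆ n : ℕ, N.map ((T ^ n : H →L[ℂ] H) : H →ₗ[ℂ] H)).topologicalClosure = ⊤) :
    Nonempty ((LinearMap.ker (adjoint T : H →ₗ[ℂ] H)) →ₗᵢ[ℂ] N) := by
  have : CompleteSpace N := hN.completeSpace_coe
  have : CompleteSpace (LinearMap.ker (adjoint T : H →ₗ[ℂ] H)) :=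
    (adjoint T).isClosed_ker.completeSpace_coe
  exact exists_linearIsometry_of_denseRange _
    (denseRange_orthogonalProjectionOnto_comp_subtypeL _ N
      (T.ker_adjoint_inf_orthogonal_eq_bot_of_dense_iSup_map_pow N hspan))
end

section
/- Let T ∈ B(H) be a 2-isometry on a complex Hilbert space H, i.e., I − 2T*T + T*²T² = 0. Then ‖Th‖ ≥ ‖h‖ for all h ∈ H; in particular T is injective and left-invertible. -/
/-!
Pairing `I − 2T*T + T*²T² = 0` with `x` gives `‖x‖² + ‖T²x‖² = 2‖Tx‖²`, so for every `h` the
sequence `‖Tⁿh‖²` is an arithmetic progression. Being nonnegative, it cannot decrease, whence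
`‖h‖ ≤ ‖Th‖`. A bounded-below operator `T` on a Hilbert space has `T*T` invertible (it is coercive),
and `(T*T)⁻¹T*` is a left inverse of `T`.
-/

open scoped InnerProductSpace

theorem monotone_of_add_eq_two_mul_of_nonneg {f : ℕ → ℝ}
    (hf : ∀ n, f n + f (n + 2) = 2 * f (n + 1)) (hf₀ : ∀ n, 0 ≤ f n) : Monotone f := by
  have hdiff : ∀ n, f (n + 1) - f n = f 1 - f 0 := by
    intro n
    induction n with
    | zero => rfl
    | succ n ih => linarith [hf n]
  have hlin : ∀ n : ℕ, f n = f 0 + n * (f 1 - f 0) := by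
    intro n
    induction n with
    | zero => simp
    | succ n ih => push_cast; linarith [hdiff n]
  suffices h01 : f 0 ≤ f 1 from monotone_nat_of_le_succ fun n => by linarith [hdiff n]
  by_contra! h10
  -- a decreasing arithmetic progression eventually becomes negative
  obtain ⟨n, hn⟩ := exists_nat_gt (f 0 / (f 0 - f 1))
  rw [div_lt_iff₀ (by linarith)] at hn
  linarith [hf₀ n, hlin n]

namespace ContinuousLinearMap

variable {𝕜 E F : Type*} [RCLike 𝕜] [NormedAddCommGroup E] [InnerProductSpace 𝕜 E]
  [CompleteSpace E] [NormedAddCommGroup F] [InnerProductSpace 𝕜 F] [CompleteSpace F]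

theorem exists_comp_eq_id_of_mul_norm_le {T : E →L[𝕜] F} {c : ℝ} (hc : 0 < c)
    (hT : ∀ x, c * ‖x‖ ≤ ‖T x‖) : ∃ S : F →L[𝕜] E, S.comp T = .id 𝕜 E := by
  have hunit : IsUnit (adjoint T ∘L T) := by
    refine isUnit_of_forall_le_norm_inner_map _ (c := ⟨c ^ 2, sq_nonneg c⟩)
      (NNReal.coe_pos.mp (pow_pos hc 2)) fun x => ?_
    calc ‖x‖ ^ 2 * c ^ 2 = (c * ‖x‖) ^ 2 := by ring
      _ ≤ ‖T x‖ ^ 2 := by gcongr; exact hT x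
      _ = RCLike.re ⟪(adjoint T ∘L T) x, x⟫_𝕜 := apply_norm_sq_eq_inner_adjoint_left T x
      _ ≤ ‖⟪(adjoint T ∘L T) x, x⟫_𝕜‖ := RCLike.re_le_norm _
  refine ⟨↑hunit.unit⁻¹ ∘L adjoint T, ?_⟩
  rw [comp_assoc, ← mul_def, hunit.val_inv_mul, one_def]

def IsTwoIsometry (T : E →L[𝕜] E) : Prop :=
  1 - 2 • (adjoint T * T) + adjoint (T ^ 2) * T ^ 2 = 0

namespace IsTwoIsometry

variable {T : E →L[𝕜] E}

theorem norm_sq_add_norm_sq_apply_apply (hT : IsTwoIsometry T) (x : E) :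
    ‖x‖ ^ 2 + ‖T (T x)‖ ^ 2 = 2 * ‖T x‖ ^ 2 := by
  have h := congrArg (fun A : E →L[𝕜] E => RCLike.re ⟪A x, x⟫_𝕜) hT
  simp only [add_apply, sub_apply, two_smul, one_apply_eq_self, zero_apply, mul_apply_eq_comp,
    inner_add_left, inner_sub_left, map_add, map_sub, inner_zero_left, map_zero,
    adjoint_inner_left, inner_self_eq_norm_sq, pow_two] at h
  linarith

theorem norm_le_norm_apply (hT : IsTwoIsometry T) (x : E) : ‖x‖ ≤ ‖T x‖ := by
  have hmono := monotone_of_add_eq_two_mul_of_nonneg (f := fun n => ‖(T ^ n) x‖ ^ 2)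
    (fun n => by
      simpa only [pow_succ', mul_apply_eq_comp] using
        hT.norm_sq_add_norm_sq_apply_apply ((T ^ n) x))
    fun n => by positivity
  simpa [sq_le_sq₀] using hmono zero_le_one

end IsTwoIsometry

end ContinuousLinearMap

open ContinuousLinearMap

/-- A `2`-isometry `T` (i.e. `I − 2T*T + T*²T² = 0`) is expansive:
`‖Th‖ ≥ ‖h‖` for all `h`; in particular `T` is injective and left-invertible. -/
theorem two_isometry_expansive {H : Type*} [NormedAddCommGroup H]
    [InnerProductSpace ℂ H] [CompleteSpace H] (T : H →L[ℂ] H)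
    (h2iso : (1 : H →L[ℂ] H) - 2 • (adjoint T * T) + adjoint (T ^ 2) * T ^ 2 = 0) :
    (∀ h : H, ‖h‖ ≤ ‖T h‖) ∧ Function.Injective T ∧
      ∃ S : H →L[ℂ] H, S.comp T = ContinuousLinearMap.id ℂ H := by
  have hexpansive : ∀ h, ‖h‖ ≤ ‖T h‖ := IsTwoIsometry.norm_le_norm_apply h2iso
  obtain ⟨S, hS⟩ := exists_comp_eq_id_of_mul_norm_le one_pos (by simpa using hexpansive)
  exact ⟨hexpansive, (leftInverse_of_comp hS).injective, S, hS⟩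
end

section
/- Let M⁽¹⁾, M⁽²⁾ be nonzero complex Hilbert spaces, and for k = 1, 2 let W⁽ᵏ⁾ be the operator valued unilateral weighted shift on ℓ²(ℕ, M⁽ᵏ⁾) with uniformly bounded weights {Wₙ⁽ᵏ⁾}ₙ≥0, where each Wₙ⁽¹⁾ has dense range. Suppose A : ℓ²(ℕ, M⁽¹⁾) → ℓ²(ℕ, M⁽²⁾) is a bounded operator with matrix representation [A_{i,j}] (A_{i,j} ∈ B(M⁽¹⁾, M⁽²⁾)) satisfying A W⁽¹⁾ = W⁽²⁾ A. Then A is lower triangular, i.e., A_{i,j} = 0 whenever i < j, and A_{i,j} W_{j−1}⁽¹⁾ ⋯ W₀⁽¹⁾ = W_{i−1}⁽²⁾ ⋯ W_{i−j}⁽²⁾ A_{i−j,0} for all i ≥ j ≥ 1. -/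
/-!
Intertwining turns `S₁ e_j f = e_{j+1} (W₁ⱼ f)` into the recursions
`A_{0,j+1} W₁ⱼ = 0` and `A_{i+1,j+1} W₁ⱼ = W₂ᵢ A_{i,j}`. Each entry `A_{i,j}` is continuous, so
by density of the range of `W₁ⱼ` the first recursion and induction on `j` kill every entry
above the diagonal; iterating the second one along a diagonal gives the product formula.
-/

open ContinuousLinearMap

/-- The product `W_{n-1} ⋯ W_0` of the first `n` weights. -/
def prodWeights {M : Type*} [NormedAddCommGroup M] [InnerProductSpace ℂ M]
    (W : ℕ → (M →L[ℂ] M)) : ℕ → (M →L[ℂ] M)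
  | 0 => ContinuousLinearMap.id ℂ M
  | n + 1 => (W n).comp (prodWeights W n)

/-- The product `W_{s+k-1} ⋯ W_s` of `k` consecutive weights starting at index `s`. -/
def segWeights {M : Type*} [NormedAddCommGroup M] [InnerProductSpace ℂ M]
    (W : ℕ → (M →L[ℂ] M)) (s : ℕ) : ℕ → (M →L[ℂ] M)
  | 0 => ContinuousLinearMap.id ℂ M
  | k + 1 => (W (s + k)).comp (segWeights W s k)

/-- The `(i,j)` matrix entry of an operator `A : ℓ²(ℕ, M1) → ℓ²(ℕ, M2)`. -/
noncomputable def matrixEntry {M1 M2 : Type*}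
    [NormedAddCommGroup M1] [InnerProductSpace ℂ M1]
    [NormedAddCommGroup M2] [InnerProductSpace ℂ M2]
    (A : lp (fun _ : ℕ => M1) 2 →L[ℂ] lp (fun _ : ℕ => M2) 2) (i j : ℕ) : M1 → M2 :=
  fun f => A (lp.single 2 j f) i

def IsWeightedShift {E F : Type*} [NormedAddCommGroup E] [FunLike F E E]
    (W : ℕ → F) (S : lp (fun _ : ℕ => E) 2 → lp (fun _ : ℕ => E) 2) : Prop :=
  ∀ h, S h 0 = 0 ∧ ∀ n, S h (n + 1) = W n (h n)

theorem IsWeightedShift.apply_single {E F : Type*} [NormedAddCommGroup E] [FunLike F E E]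
    [ZeroHomClass F E E] {W : ℕ → F} {S : lp (fun _ : ℕ => E) 2 → lp (fun _ : ℕ => E) 2}
    (hS : IsWeightedShift W S) (j : ℕ) (f : E) :
    S (lp.single 2 j f) = lp.single 2 (j + 1) (W j f) := by
  ext n
  rcases n with _ | n
  · rw [(hS _).1, lp.single_apply_ne _ _ _ (by omega)]
  · rw [(hS _).2 n]
    by_cases h : n = j
    · subst h
      rw [lp.single_apply_self, lp.single_apply_self]
    · rw [lp.single_apply_ne _ _ _ h, lp.single_apply_ne _ _ _ (by omega), map_zero]

section Intertwiner

variable {M1 M2 : Type*}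
    [NormedAddCommGroup M1] [InnerProductSpace ℂ M1]
    [NormedAddCommGroup M2] [InnerProductSpace ℂ M2]

theorem continuous_matrixEntry (A : lp (fun _ : ℕ => M1) 2 →L[ℂ] lp (fun _ : ℕ => M2) 2)
    (i j : ℕ) : Continuous (matrixEntry A i j) :=
  (lp.evalCLM ℂ _ 2 i ∘L A ∘L lp.singleContinuousLinearMap ℂ _ 2 j).continuous

variable {A : lp (fun _ : ℕ => M1) 2 →L[ℂ] lp (fun _ : ℕ => M2) 2}
    {W1 : ℕ → (M1 →L[ℂ] M1)} {W2 : ℕ → (M2 →L[ℂ] M2)}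
    {S1 : lp (fun _ : ℕ => M1) 2 →L[ℂ] lp (fun _ : ℕ => M1) 2}
    {S2 : lp (fun _ : ℕ => M2) 2 →L[ℂ] lp (fun _ : ℕ => M2) 2}

theorem matrixEntry_succ_weight (hS1 : IsWeightedShift W1 S1) (hA : A ∘L S1 = S2 ∘L A)
    (i j : ℕ) (f : M1) :
    matrixEntry A i (j + 1) (W1 j f) = S2 (A (lp.single 2 j f)) i := by
  rw [matrixEntry, ← hS1.apply_single, ← comp_apply, hA, comp_apply]

theorem matrixEntry_zero_succ_weight (hS1 : IsWeightedShift W1 S1)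
    (hS2 : IsWeightedShift W2 S2) (hA : A ∘L S1 = S2 ∘L A) (j : ℕ) (f : M1) :
    matrixEntry A 0 (j + 1) (W1 j f) = 0 := by
  rw [matrixEntry_succ_weight hS1 hA, (hS2 _).1]

theorem matrixEntry_succ_succ_weight (hS1 : IsWeightedShift W1 S1)
    (hS2 : IsWeightedShift W2 S2) (hA : A ∘L S1 = S2 ∘L A) (i j : ℕ) (f : M1) :
    matrixEntry A (i + 1) (j + 1) (W1 j f) = W2 i (matrixEntry A i j f) := by
  rw [matrixEntry_succ_weight hS1 hA, (hS2 _).2]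
  rfl

theorem matrixEntry_eq_zero_of_lt (hdense : ∀ n, DenseRange (W1 n))
    (hS1 : IsWeightedShift W1 S1) (hS2 : IsWeightedShift W2 S2) (hA : A ∘L S1 = S2 ∘L A)
    {i j : ℕ} (hij : i < j) (f : M1) : matrixEntry A i j f = 0 := by
  induction j generalizing i f with
  | zero => omega
  | succ j ih =>
    -- an entry of column `j + 1` is determined by its values on the dense range of `W1 j`
    suffices matrixEntry A i (j + 1) = fun _ => 0 from congrFun this f
    refine (hdense j).equalizer (continuous_matrixEntry A i (j + 1)) continuous_const
      (funext fun g => ?_)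
    rcases i with _ | i
    · exact matrixEntry_zero_succ_weight hS1 hS2 hA j g
    · rw [Function.comp_apply, matrixEntry_succ_succ_weight hS1 hS2 hA, ih (by omega),
        map_zero, Function.comp_apply]

theorem matrixEntry_add_prodWeights (hS1 : IsWeightedShift W1 S1)
    (hS2 : IsWeightedShift W2 S2) (hA : A ∘L S1 = S2 ∘L A) (i j : ℕ) (f : M1) :
    matrixEntry A (i + j) j (prodWeights W1 j f) = segWeights W2 i j (matrixEntry A i 0 f) := by
  induction j with
  | zero => rfl
  | succ j ih =>
    rw [← add_assoc]
    exact (matrixEntry_succ_succ_weight hS1 hS2 hA _ _ _).trans (congrArg (W2 (i + j)) ih)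

end Intertwiner

theorem intertwiner_lower_triangular_general {M1 M2 : Type*}
    [NormedAddCommGroup M1] [InnerProductSpace ℂ M1]
    [NormedAddCommGroup M2] [InnerProductSpace ℂ M2]
    (W1 : ℕ → (M1 →L[ℂ] M1)) (W2 : ℕ → (M2 →L[ℂ] M2))
    (hdense : ∀ n, DenseRange (W1 n))
    (Wop1 : lp (fun _ : ℕ => M1) 2 →L[ℂ] lp (fun _ : ℕ => M1) 2)
    (hWop1 : ∀ h : lp (fun _ : ℕ => M1) 2,
      Wop1 h 0 = 0 ∧ ∀ n : ℕ, Wop1 h (n + 1) = W1 n (h n))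
    (Wop2 : lp (fun _ : ℕ => M2) 2 →L[ℂ] lp (fun _ : ℕ => M2) 2)
    (hWop2 : ∀ h : lp (fun _ : ℕ => M2) 2,
      Wop2 h 0 = 0 ∧ ∀ n : ℕ, Wop2 h (n + 1) = W2 n (h n))
    (A : lp (fun _ : ℕ => M1) 2 →L[ℂ] lp (fun _ : ℕ => M2) 2)
    (hA : A.comp Wop1 = Wop2.comp A) :
    (∀ i j : ℕ, i < j → ∀ f : M1, matrixEntry A i j f = 0) ∧
      (∀ i j : ℕ, 1 ≤ j → j ≤ i → ∀ f : M1,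
        matrixEntry A i j (prodWeights W1 j f) =
          segWeights W2 (i - j) j (matrixEntry A (i - j) 0 f)) := by
  refine ⟨fun i j hij f => matrixEntry_eq_zero_of_lt hdense hWop1 hWop2 hA hij f,
    fun i j _ hji f => ?_⟩
  obtain ⟨m, rfl⟩ := Nat.exists_eq_add_of_le' hji
  rw [Nat.add_sub_cancel]
  exact matrixEntry_add_prodWeights hWop1 hWop2 hA m j f

/-- If `A` intertwines two operator valued unilateral weighted shifts `W⁽¹⁾`, `W⁽²⁾`
whose first family of weights has dense range, then `A` is lower triangular and
`A_{i,j} W_{j−1}⁽¹⁾ ⋯ W₀⁽¹⁾ = W_{i−1}⁽²⁾ ⋯ W_{i−j}⁽²⁾ A_{i−j,0}` for `i ≥ j ≥ 1`. -/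
theorem intertwiner_lower_triangular {M1 M2 : Type*}
    [NormedAddCommGroup M1] [InnerProductSpace ℂ M1] [CompleteSpace M1] [Nontrivial M1]
    [NormedAddCommGroup M2] [InnerProductSpace ℂ M2] [CompleteSpace M2] [Nontrivial M2]
    (W1 : ℕ → (M1 →L[ℂ] M1)) (W2 : ℕ → (M2 →L[ℂ] M2))
    (C : ℝ) (hC1 : ∀ n, ‖W1 n‖ ≤ C) (hC2 : ∀ n, ‖W2 n‖ ≤ C)
    (hdense : ∀ n, DenseRange (W1 n))
    (Wop1 : lp (fun _ : ℕ => M1) 2 →L[ℂ] lp (fun _ : ℕ => M1) 2)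
    (hWop1 : ∀ h : lp (fun _ : ℕ => M1) 2,
      Wop1 h 0 = 0 ∧ ∀ n : ℕ, Wop1 h (n + 1) = W1 n (h n))
    (Wop2 : lp (fun _ : ℕ => M2) 2 →L[ℂ] lp (fun _ : ℕ => M2) 2)
    (hWop2 : ∀ h : lp (fun _ : ℕ => M2) 2,
      Wop2 h 0 = 0 ∧ ∀ n : ℕ, Wop2 h (n + 1) = W2 n (h n))
    (A : lp (fun _ : ℕ => M1) 2 →L[ℂ] lp (fun _ : ℕ => M2) 2)
    (hA : A.comp Wop1 = Wop2.comp A) :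
    (∀ i j : ℕ, i < j → ∀ f : M1, matrixEntry A i j f = 0) ∧
      (∀ i j : ℕ, 1 ≤ j → j ≤ i → ∀ f : M1,
        matrixEntry A i j (prodWeights W1 j f) =
          segWeights W2 (i - j) j (matrixEntry A (i - j) 0 f)) :=
  intertwiner_lower_triangular_general W1 W2 hdense Wop1 hWop1 Wop2 hWop2 A hA
end
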